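/- arXiv:2011.02755 — 2 statements merged into one kernel-verified Lean document; each statement's English description precedes it below -/
import Mathlib

section
/- For any multiplicative character A on F_q and any x ∈ F_q, one has Ā(1-x) = δ(x) + (q/(q-1)) Σ_{χ} (Aχ choose χ) χ(x), where the sum is over all multiplicative characters χ of F_q, and δ(x) = 1 if x = 0 and δ(x) = 0 otherwise. -/
open Finset

variable {F : Type} [Field F] [Fintype F] [DecidableEq F]

noncomputable instance : Fintype (MulChar F ℂ) := Fintype.ofFinite _

/-- Finite field binomial coefficient `(A choose B) := B(-1)/q · Σ_x A(x) B⁻¹(1-x)`. -/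
noncomputable def binom (A B : MulChar F ℂ) : ℂ :=
  B (-1) / (Fintype.card F : ℂ) * ∑ x : F, A x * B⁻¹ (1 - x)

/-!
Expanding the binomial coefficients, `(Aχ choose χ) χ(x) = q⁻¹ Σ_t A(t) χ(-x t / (1 - t))`,
so after exchanging the sums the orthogonality relation `Σ_χ χ(a) = (q - 1) [a = 1]` picks out
the single `t` with `-x t = 1 - t`, namely `t = (1 - x)⁻¹`, for which `A(t) = A⁻¹(1 - x)`.
For `x = 0` both sides reduce to `δ(0) = 1` because every character vanishes at `0`.
-/

namespace MulChar

section Orthogonality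

variable {M R : Type*} [CommMonoid M] [Finite M] [CommRing R] [IsDomain R]
  [HasEnoughRootsOfUnity R (Monoid.exponent Mˣ)] [Fintype (MulChar M R)]

theorem sum_apply_eq_zero_of_ne_one {a : M} (ha : a ≠ 1) : ∑ χ : MulChar M R, χ a = 0 := by
  obtain ⟨ψ, hψ⟩ := exists_apply_ne_one_of_hasEnoughRootsOfUnity M R ha
  refine eq_zero_of_mul_eq_self_left hψ ?_
  simp only [mul_sum, ← MulChar.mul_apply]
  exact Fintype.sum_bijective _ (Group.mulLeft_bijective ψ) _ _ fun _ ↦ rfl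

theorem sum_apply_eq_ite [DecidableEq M] (a : M) :
    ∑ χ : MulChar M R, χ a = if a = 1 then (Nat.card Mˣ : R) else 0 := by
  split_ifs with ha
  · simp [ha, ← Nat.card_eq_fintype_card, card_eq_card_units_of_hasEnoughRootsOfUnity]
  · exact sum_apply_eq_zero_of_ne_one ha

end Orthogonality

theorem sum_ite_mul_eq_one {K R : Type*} [Field K] [Fintype K] [DecidableEq K] [CommSemiring R]
    (χ : MulChar K R) (y : K) :
    ∑ t : K, (if t * y = 1 then χ t else 0) = χ⁻¹ y := by
  by_cases hy : y = 0
  · simp [hy]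
  · simp [mul_eq_one_iff_eq_inv₀ hy, inv_apply']

end MulChar

theorem sum_mulChar_apply (a : F) :
    ∑ χ : MulChar F ℂ, χ a = if a = 1 then (Fintype.card F : ℂ) - 1 else 0 := by
  rw [MulChar.sum_apply_eq_ite, Nat.card_eq_fintype_card, Fintype.card_units,
    Nat.cast_sub Fintype.card_pos, Nat.cast_one]

omit [DecidableEq F] in
theorem binom_mul_apply (A χ : MulChar F ℂ) (x : F) :
    binom (A * χ) χ * χ x = (Fintype.card F : ℂ)⁻¹ * ∑ t : F, A t * χ (-(x * t) * (1 - t)⁻¹) := by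
  rw [binom, div_eq_inv_mul, mul_sum, sum_mul, mul_sum]
  refine sum_congr rfl fun t _ ↦ ?_
  have harg : -(x * t) * (1 - t)⁻¹ = -1 * t * x * (1 - t)⁻¹ := by ring
  rw [harg, map_mul, map_mul, map_mul, MulChar.mul_apply, MulChar.inv_apply']
  ring

theorem neg_mul_mul_inv_one_sub_eq_one_iff {K : Type*} [Field K] {x : K} (hx : x ≠ 0) (t : K) :
    -(x * t) * (1 - t)⁻¹ = 1 ↔ t * (1 - x) = 1 := by
  by_cases ht : t = 1
  · simp [ht, hx]
  · rw [mul_inv_eq_one₀ (sub_ne_zero.mpr (Ne.symm ht))]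
    constructor <;> intro h <;> linear_combination h

theorem sum_binom_mul_apply (A : MulChar F ℂ) {x : F} (hx : x ≠ 0) :
    ∑ χ : MulChar F ℂ, binom (A * χ) χ * χ x =
      ((Fintype.card F : ℂ) - 1) / Fintype.card F * A⁻¹ (1 - x) := by
  calc ∑ χ : MulChar F ℂ, binom (A * χ) χ * χ x
      = (Fintype.card F : ℂ)⁻¹ * ∑ t : F, A t * ∑ χ : MulChar F ℂ, χ (-(x * t) * (1 - t)⁻¹) := by
        simp only [binom_mul_apply, mul_sum]
        exact sum_comm
    _ = (Fintype.card F : ℂ)⁻¹ *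
          ∑ t : F, (if t * (1 - x) = 1 then A t else 0) * ((Fintype.card F : ℂ) - 1) := by
        simp only [sum_mulChar_apply, neg_mul_mul_inv_one_sub_eq_one_iff hx, mul_ite, ite_mul,
          mul_zero, zero_mul]
    _ = ((Fintype.card F : ℂ) - 1) / Fintype.card F * A⁻¹ (1 - x) := by
        rw [← sum_mul, MulChar.sum_ite_mul_eq_one]
        ring

theorem inv_one_sub_eq_char_sum (A : MulChar F ℂ) (x : F) :
    A⁻¹ (1 - x) =
      (if x = 0 then (1 : ℂ) else 0) +
        (Fintype.card F : ℂ) / ((Fintype.card F : ℂ) - 1) *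
          ∑ χ : MulChar F ℂ, binom (A * χ) χ * χ x := by
  by_cases hx : x = 0
  · simp [hx, MulChar.map_zero]
  have hq : (Fintype.card F : ℂ) ≠ 0 := Nat.cast_ne_zero.mpr Fintype.card_ne_zero
  have hq1 : (Fintype.card F : ℂ) - 1 ≠ 0 := by
    rw [sub_ne_zero, Ne, Nat.cast_eq_one]
    exact Fintype.one_lt_card.ne'
  rw [sum_binom_mul_apply A hx, if_neg hx, zero_add]
  field_simp
end

section
/- Finite field analogue of the multinomial expansion (n=1 binomial case with Jacobi sums): for a nontrivial multiplicative character A on F_q and x ∈ F_q, A(1+x) = δ(x) + (1/(q-1)) Σ_χ J(A, χ̄) χ(-x), where the sum is over all multiplicative characters χ of F_q, J(A,χ̄) = Σ_{c} A(1+c)χ̄(-c), and δ(x)=1 iff x=0. -/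
/-!
By orthogonality of characters, `∑ χ, χ⁻¹ a * χ b = (q - 1) [a = b]` for `b ≠ 0`, so after the
substitution `c ↦ -c` the character sum is the Fourier inversion formula for `c ↦ A (1 - c)`,
evaluated at `-x`. At `x = 0` every character vanishes (in Mathlib the trivial one too, since it
is `0` on non-units), leaving `A 1 = 1`.
-/

open Finset

variable {F : Type} [Field F] [Fintype F] [DecidableEq F]

namespace MulChar

theorem sum_characters_eq {M R : Type*} [CommMonoid M] [Finite M] [CommRing R] [IsDomain R]
    [HasEnoughRootsOfUnity R (Monoid.exponent Mˣ)] [Fintype (MulChar M R)] [DecidableEq M]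
    (a : M) :
    ∑ χ : MulChar M R, χ a = if a = 1 then (Nat.card Mˣ : R) else 0 := by
  split_ifs with ha
  · simp [ha, ← Nat.card_eq_fintype_card, card_eq_card_units_of_hasEnoughRootsOfUnity]
  · obtain ⟨χ, hχ⟩ := exists_apply_ne_one_of_hasEnoughRootsOfUnity M R ha
    refine eq_zero_of_mul_eq_self_left hχ ?_
    simp only [Finset.mul_sum, ← mul_apply]
    exact Fintype.sum_bijective _ (Group.mulLeft_bijective χ) _ _ fun _ ↦ rfl

section Field

variable {K R : Type*} [Field K] [Fintype K] [CommRing R] [IsDomain R]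
  [HasEnoughRootsOfUnity R (Monoid.exponent Kˣ)] [Fintype (MulChar K R)]

theorem sum_inv_apply_mul_apply [DecidableEq K] (a : K) {b : K} (hb : b ≠ 0) :
    ∑ χ : MulChar K R, χ⁻¹ a * χ b = if a = b then (Fintype.card K : R) - 1 else 0 := by
  have hab : a⁻¹ * b = 1 ↔ a = b := by
    rcases eq_or_ne a 0 with rfl | ha
    · simp [hb.symm]
    · rw [inv_mul_eq_one₀ ha]
  simp_rw [inv_apply', ← map_mul, sum_characters_eq, hab, Nat.card_eq_fintype_card,
    Fintype.card_units, Nat.cast_sub Fintype.card_pos, Nat.cast_one]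

theorem fourier_inversion (f : K → R) {b : K} (hb : b ≠ 0) :
    ∑ χ : MulChar K R, (∑ c, f c * χ⁻¹ c) * χ b = ((Fintype.card K : R) - 1) * f b := by
  classical
  calc ∑ χ : MulChar K R, (∑ c, f c * χ⁻¹ c) * χ b
      = ∑ c, f c * ∑ χ : MulChar K R, χ⁻¹ c * χ b := by
        simp_rw [Finset.sum_mul, Finset.mul_sum, mul_assoc]
        exact Finset.sum_comm
    _ = ∑ c, f c * if c = b then (Fintype.card K : R) - 1 else 0 := by
        simp_rw [sum_inv_apply_mul_apply _ hb]
    _ = ((Fintype.card K : R) - 1) * f b := by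
        simp [mul_comm]

end Field

end MulChar

theorem char_binomial_expansion_general (A : MulChar F ℂ) (x : F) :
    A (1 + x) =
      (if x = 0 then (1 : ℂ) else 0) +
        1 / ((Fintype.card F : ℂ) - 1) *
          ∑ χ : MulChar F ℂ,
            (∑ c : F, A (1 + c) * χ⁻¹ (-c)) * χ (-x) := by
  rcases eq_or_ne x 0 with rfl | hx
  · simp [MulChar.map_zero]
  have hq : (Fintype.card F : ℂ) - 1 ≠ 0 := by
    rw [sub_ne_zero]
    exact_mod_cast Fintype.one_lt_card.ne'
  have hneg (χ : MulChar F ℂ) :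
      ∑ c : F, A (1 + c) * χ⁻¹ (-c) = ∑ c : F, A (1 - c) * χ⁻¹ c :=
    Fintype.sum_equiv (Equiv.neg F) _ _ fun c ↦ by simp [sub_eq_add_neg]
  simp_rw [hneg, MulChar.fourier_inversion (fun c ↦ A (1 - c)) (neg_ne_zero.2 hx), if_neg hx,
    sub_neg_eq_add, zero_add]
  field_simp

theorem char_binomial_expansion (A : MulChar F ℂ) (hA : A ≠ 1) (x : F) :
    A (1 + x) =
      (if x = 0 then (1 : ℂ) else 0) +
        1 / ((Fintype.card F : ℂ) - 1) *
          ∑ χ : MulChar F ℂ,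
            (∑ c : F, A (1 + c) * χ⁻¹ (-c)) * χ (-x) :=
  char_binomial_expansion_general A x
end
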